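/- The map sending an ordered set partition π = B_1/.../B_k of [n] to the word w(π) = w_1...w_n ∈ [k]^n defined by w_i = j iff i ∈ B_j is a bijection between ordered set partitions of [n] into k blocks and surjective words of length n over [k]; moreover, π contains a permutation pattern p if and only if w(π) contains the pattern p^{-1}. -/

import Mathlib

open Finset BigOperators

/-- A word `w` of length `n` over the alphabet `[k]` contains the permutation
pattern `p` of length `m`. -/
def WordContains {n k m : ℕ} (w : Fin n → Fin k) (p : Equiv.Perm (Fin m)) : Prop :=
  ∃ ι : Fin m → Fin n, StrictMono ι ∧ ∀ a b : Fin m, w (ι a) < w (ι b) ↔ p a < p b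

/-- The number of words of length `n` over the alphabet `[k]` avoiding the pattern `p`. -/
noncomputable def wordAvoidCount (n k m : ℕ) (p : Equiv.Perm (Fin m)) : ℕ :=
  Nat.card {w : Fin n → Fin k // ¬ WordContains w p}

/-- An ordered set partition of `[n]` into `k` blocks. -/
structure OrdPartition (n k : ℕ) where
  blocks : Fin k → Finset (Fin n)
  blocks_nonempty : ∀ i, (blocks i).Nonempty
  blocks_disjoint : ∀ i j, i ≠ j → Disjoint (blocks i) (blocks j)
  blocks_cover : ∀ x : Fin n, ∃ i, x ∈ blocks i

/-- An ordered set partition contains the permutation pattern `p`. -/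
def OPContains {n k m : ℕ} (P : OrdPartition n k) (p : Equiv.Perm (Fin m)) : Prop :=
  ∃ ι : Fin m → Fin k, StrictMono ι ∧ ∃ b : Fin m → Fin n,
    (∀ j, b j ∈ P.blocks (ι j)) ∧ ∀ a c : Fin m, b a < b c ↔ p a < p c

/-- The number of ordered set partitions of `[n]` into `k` blocks avoiding `p`. -/
noncomputable def opAvoidCount (n k m : ℕ) (p : Equiv.Perm (Fin m)) : ℕ :=
  Nat.card {P : OrdPartition n k // ¬ OPContains P p}

/-- The pattern 321. -/
def p321 : Equiv.Perm (Fin 3) := Fin.revPerm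

/-!
A partition is recovered from its word as the family of fibres, which makes the
correspondence a bijection. For patterns, an occurrence of `p` in `π` is a map
`b : [m] → [n]` whose positions are ordered like `p` and whose block indices
`w ∘ b` increase; precomposing with `p⁻¹` turns it into an increasing choice of
positions whose letters are ordered like `p⁻¹`, i.e. an occurrence of `p⁻¹` in `w(π)`.
-/

namespace OrdPartition

variable {n k : ℕ}

@[ext]
theorem ext_blocks {P Q : OrdPartition n k} (h : P.blocks = Q.blocks) : P = Q := by
  cases P; cases Q; simp_all

noncomputable def toWord (P : OrdPartition n k) (i : Fin n) : Fin k :=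
  (P.blocks_cover i).choose

theorem mem_blocks_toWord (P : OrdPartition n k) (i : Fin n) : i ∈ P.blocks (P.toWord i) :=
  (P.blocks_cover i).choose_spec

theorem toWord_eq_iff (P : OrdPartition n k) (i : Fin n) (j : Fin k) :
    P.toWord i = j ↔ i ∈ P.blocks j := by
  refine ⟨fun h => h ▸ P.mem_blocks_toWord i, fun hi => ?_⟩
  by_contra hne
  exact Finset.disjoint_left.mp (P.blocks_disjoint _ _ hne) (P.mem_blocks_toWord i) hi

theorem surjective_toWord (P : OrdPartition n k) : Function.Surjective P.toWord := fun j =>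
  (P.blocks_nonempty j).imp fun i hi => (P.toWord_eq_iff i j).2 hi

def ofSurjective (w : Fin n → Fin k) (hw : Function.Surjective w) : OrdPartition n k where
  blocks j := {i | w i = j}
  blocks_nonempty j := (hw j).imp fun i hi => by simp [hi]
  blocks_disjoint _ _ hij := Finset.disjoint_filter.2 fun _ _ hi hj => hij (hi ▸ hj)
  blocks_cover x := ⟨w x, by simp⟩

theorem mem_blocks_ofSurjective (w : Fin n → Fin k) (hw : Function.Surjective w)
    (i : Fin n) (j : Fin k) : i ∈ (ofSurjective w hw).blocks j ↔ w i = j := by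
  simp [ofSurjective]

noncomputable def equivSurjectiveWord :
    OrdPartition n k ≃ {w : Fin n → Fin k // Function.Surjective w} where
  toFun P := ⟨P.toWord, P.surjective_toWord⟩
  invFun w := ofSurjective w.1 w.2
  left_inv P := by
    ext j i
    rw [mem_blocks_ofSurjective, toWord_eq_iff]
  right_inv w := Subtype.ext <| funext fun i =>
    ((ofSurjective w.1 w.2).toWord_eq_iff i _).2 ((mem_blocks_ofSurjective _ _ _ _).2 rfl)

theorem opContains_iff {m : ℕ} (P : OrdPartition n k) (p : Equiv.Perm (Fin m)) :
    OPContains P p ↔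
      ∃ b : Fin m → Fin n, StrictMono (P.toWord ∘ b) ∧ ∀ a c, b a < b c ↔ p a < p c := by
  constructor
  · rintro ⟨ι, hι, b, hb, hbp⟩
    have hιb : P.toWord ∘ b = ι := funext fun j => (P.toWord_eq_iff _ _).2 (hb j)
    exact ⟨b, hιb ▸ hι, hbp⟩
  · rintro ⟨b, hb, hbp⟩
    exact ⟨P.toWord ∘ b, hb, b, fun j => P.mem_blocks_toWord (b j), hbp⟩

end OrdPartition

theorem wordContains_inv_iff {n k m : ℕ} (w : Fin n → Fin k) (p : Equiv.Perm (Fin m)) :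
    WordContains w p⁻¹ ↔
      ∃ b : Fin m → Fin n, StrictMono (w ∘ b) ∧ ∀ a c, b a < b c ↔ p a < p c := by
  constructor
  · rintro ⟨ι, hι, hw⟩
    exact ⟨ι ∘ p, fun a c hac => (hw (p a) (p c)).2 (by simpa using hac), fun _ _ => hι.lt_iff_lt⟩
  · rintro ⟨b, hb, hbp⟩
    exact ⟨b ∘ ⇑p⁻¹, fun x y hxy => (hbp _ _).2 (by simpa using hxy), fun _ _ => hb.lt_iff_lt⟩

theorem op_word_bijection (n k : ℕ) :
    ∃ e : OrdPartition n k ≃ {w : Fin n → Fin k // Function.Surjective w},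
      (∀ (P : OrdPartition n k) (i : Fin n) (j : Fin k),
          (e P).1 i = j ↔ i ∈ P.blocks j) ∧
      (∀ (m : ℕ) (p : Equiv.Perm (Fin m)) (P : OrdPartition n k),
          OPContains P p ↔ WordContains (e P).1 p⁻¹) :=
  ⟨OrdPartition.equivSurjectiveWord, OrdPartition.toWord_eq_iff, fun _ p P =>
    (P.opContains_iff p).trans (wordContains_inv_iff P.toWord p).symm⟩
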